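/- Assume D(C_φ) is dense in L²(μ). Then the composition operator C_φ maps its domain into itself if and only if there exists c > 0 such that h_2 ≤ c(1 + h_1) μ-a.e., where h_i = d(μ∘φ^{-i})/dμ. -/

import Mathlib

/-!
By the change of variables `∫ |f ∘ φ^[i]|² dμ = ∫ hᵢ |f|² dμ`, a function `f` lies in `D(C_φ)`
iff `∫ (1 + h₁) |f|² dμ < ∞`, and then `C_φ f ∈ D(C_φ)` iff moreover `∫ h₂ |f|² dμ < ∞`.
So `C_φ` leaves its domain invariant iff every weight `s ≥ 0` integrable against `1 + h₁` is
integrable against `h₂`. This holds when `h₂ ≤ c (1 + h₁)`; otherwise every set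
`{2ⁿ (1 + h₁) < h₂}` is non-null, and a normalized sum of indicators of subsets of these sets
is integrable against `1 + h₁` but not against `h₂`.
-/

open MeasureTheory ENNReal NNReal

section WeightedIntegrability

variable {X : Type*} [MeasurableSpace X] {μ : Measure X} {w v : X → ℝ≥0∞}

lemma lintegral_mul_tsum_indicator_const {g : X → ℝ≥0∞} (hg : Measurable g) {B : ℕ → Set X}
    (hB : ∀ n, MeasurableSet (B n)) (b : ℕ → ℝ≥0∞) :
    ∫⁻ x, g x * ∑' n, (B n).indicator (fun _ => b n) x ∂μ = ∑' n, b n * ∫⁻ x in B n, g x ∂μ := by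
  simp_rw [← ENNReal.tsum_mul_left]
  rw [lintegral_tsum (f := fun n x => g x * (B n).indicator (fun _ => b n) x)
    fun n => (hg.mul (measurable_const.indicator (hB n))).aemeasurable]
  congr 1 with n
  simp_rw [← Set.indicator_mul_right, lintegral_indicator (hB n), mul_comm _ (b n)]
  exact lintegral_const_mul _ hg

variable [SigmaFinite μ]

lemma exists_subset_setLIntegral_pos_lt_top (hw : Measurable w) (hw0 : ∀ x, w x ≠ 0)
    {A : Set X} (hA : MeasurableSet A) (hμA : μ A ≠ 0) (hwA : ∀ x ∈ A, w x ≠ ∞) :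
    ∃ B ⊆ A, MeasurableSet B ∧ 0 < ∫⁻ x in B, w x ∂μ ∧ ∫⁻ x in B, w x ∂μ < ∞ := by
  have : SigmaFinite ((μ.restrict A).withDensity w) :=
    SigmaFinite.withDensity_of_ne_top ((ae_restrict_iff' hA).2 (ae_of_all _ hwA))
  have hpos : 0 < (μ.restrict A).withDensity w A := by
    rw [withDensity_apply _ hA, Measure.restrict_restrict hA, Set.inter_self,
      setLIntegral_pos_iff hw, Function.support_eq_univ hw0, Set.univ_inter]
    exact pos_iff_ne_zero.2 hμA
  obtain ⟨B, hB, hBA, hBpos, hBfin⟩ := Measure.exists_subset_measure_lt_top hA hpos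
  rw [withDensity_apply _ hB, Measure.restrict_restrict hB, Set.inter_eq_left.2 hBA] at hBpos hBfin
  exact ⟨B, hBA, hB, hBpos, hBfin⟩

/- The weight `(2ⁿ ∫_{Bₙ} w)⁻¹` on a set `Bₙ ⊆ {2ⁿ w < v}` contributes `2⁻ⁿ` to `∫ w s` but
at least `1` to `∫ v s`. -/
lemma exists_lintegral_mul_lt_top_and_eq_top (hw : Measurable w) (hv : Measurable v)
    (hw0 : ∀ x, w x ≠ 0) (hvw : ∀ n : ℕ, μ {x | 2 ^ n * w x < v x} ≠ 0) :
    ∃ s : X → ℝ≥0∞, Measurable s ∧ ∫⁻ x, w x * s x ∂μ < ∞ ∧ ∫⁻ x, v x * s x ∂μ = ∞ := by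
  have hwA : ∀ n, ∀ x ∈ {x | 2 ^ n * w x < v x}, w x ≠ ∞ := fun n x hx hx' => by
    simp [hx'] at hx
  choose B hBA hB hBpos hBfin using fun n => exists_subset_setLIntegral_pos_lt_top hw hw0
    (measurableSet_lt (measurable_const.mul hw) hv) (hvw n) (hwA n)
  set b : ℕ → ℝ≥0∞ := fun n => (2 ^ n * ∫⁻ x in B n, w x ∂μ)⁻¹
  have hsum (g : X → ℝ≥0∞) (hg : Measurable g) :=
    lintegral_mul_tsum_indicator_const (μ := μ) hg hB b
  have h2I_ne_top (n : ℕ) : 2 ^ n * ∫⁻ x in B n, w x ∂μ ≠ ∞ :=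
    ENNReal.mul_ne_top (by simp) (hBfin n).ne
  refine ⟨fun x => ∑' n, (B n).indicator (fun _ => b n) x,
    .tsum fun n => measurable_const.indicator (hB n), ?_, ?_⟩
  · have hb (n : ℕ) : b n * ∫⁻ x in B n, w x ∂μ = 2⁻¹ ^ n := by
      simp only [b]
      rw [ENNReal.mul_inv (Or.inl (by simp)) (Or.inl (by simp)), mul_assoc,
        ENNReal.inv_mul_cancel (hBpos n).ne' (hBfin n).ne, mul_one, ENNReal.inv_pow]
    rw [hsum w hw, tsum_congr hb, ENNReal.tsum_geometric]
    exact ENNReal.inv_lt_top.2 (tsub_pos_of_lt (ENNReal.inv_lt_one.2 one_lt_two))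
  · have hb (n : ℕ) : 1 ≤ b n * ∫⁻ x in B n, v x ∂μ := by
      have hle : 2 ^ n * ∫⁻ x in B n, w x ∂μ ≤ ∫⁻ x in B n, v x ∂μ := by
        rw [← lintegral_const_mul _ hw]
        exact setLIntegral_mono hv fun x hx => (hBA n hx).le
      calc (1 : ℝ≥0∞) = b n * (2 ^ n * ∫⁻ x in B n, w x ∂μ) :=
            (ENNReal.inv_mul_cancel (by simp [(hBpos n).ne']) (h2I_ne_top n)).symm
        _ ≤ b n * ∫⁻ x in B n, v x ∂μ := by gcongr
    rw [hsum v hv, ← top_le_iff, ← ENNReal.tsum_const_eq_top_of_ne_zero (α := ℕ) one_ne_zero]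
    exact ENNReal.tsum_le_tsum hb

theorem exists_ae_le_const_mul_of_forall_lintegral_lt_top (hw : Measurable w)
    (hv : Measurable v) (hw0 : ∀ x, w x ≠ 0)
    (H : ∀ s : X → ℝ≥0, Measurable s → ∫⁻ x, w x * s x ∂μ < ∞ → ∫⁻ x, v x * s x ∂μ < ∞) :
    ∃ c : ℝ≥0, 0 < c ∧ ∀ᵐ x ∂μ, v x ≤ c * w x := by
  by_contra! hc
  have hvw (n : ℕ) : μ {x | 2 ^ n * w x < v x} ≠ 0 := by
    simpa [frequently_ae_iff] using hc (2 ^ n) (by positivity)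
  obtain ⟨s, hs, hws, hvs⟩ := exists_lintegral_mul_lt_top_and_eq_top hw hv hw0 hvw
  have hs_eq : (fun x => ((s x).toNNReal : ℝ≥0∞)) =ᵐ[μ] s := by
    filter_upwards [ae_lt_top (hw.mul hs) hws.ne] with x hx
    exact ENNReal.coe_toNNReal fun h => by simp [h, hw0 x] at hx
  have hmul (u : X → ℝ≥0∞) : (fun x => u x * (s x).toNNReal) =ᵐ[μ] fun x => u x * s x :=
    hs_eq.mono fun x hx => congrArg (u x * ·) hx
  refine (H _ hs.ennreal_toNNReal ?_).ne ?_
  · rwa [lintegral_congr_ae (hmul w)]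
  · rwa [lintegral_congr_ae (hmul v)]

end WeightedIntegrability

section Composition

variable {X Y E : Type*} [MeasurableSpace X] [MeasurableSpace Y] [NormedAddCommGroup E]
  {μ : Measure X} {ν : Measure Y}

lemma memLp_two_iff_lintegral_enorm_sq_lt_top {f : X → E} :
    MemLp f 2 μ ↔ AEStronglyMeasurable f μ ∧ ∫⁻ x, ‖f x‖ₑ ^ 2 ∂μ < ∞ := by
  rw [MemLp, eLpNorm_lt_top_iff_lintegral_rpow_enorm_lt_top two_ne_zero ofNat_ne_top]
  simp only [toReal_ofNat, ENNReal.rpow_two]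

variable [SFinite μ] [SigmaFinite ν]

lemma lintegral_comp_eq_lintegral_rnDeriv_mul {φ : X → Y}
    (hφ : Measure.QuasiMeasurePreserving φ μ ν) {g : Y → ℝ≥0∞} (hg : AEMeasurable g ν) :
    ∫⁻ x, g (φ x) ∂μ = ∫⁻ y, (μ.map φ).rnDeriv ν y * g y ∂ν := by
  rw [lintegral_rnDeriv_mul hφ.absolutelyContinuous hg,
    lintegral_map' (hg.mono_ac hφ.absolutelyContinuous) hφ.aemeasurable]

lemma memLp_two_comp_iff {φ : X → Y} (hφ : Measure.QuasiMeasurePreserving φ μ ν) {f : Y → E}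
    (hf : AEStronglyMeasurable f ν) :
    MemLp (fun x => f (φ x)) 2 μ ↔ ∫⁻ y, (μ.map φ).rnDeriv ν y * ‖f y‖ₑ ^ 2 ∂ν < ∞ := by
  rw [memLp_two_iff_lintegral_enorm_sq_lt_top,
    lintegral_comp_eq_lintegral_rnDeriv_mul hφ (hf.enorm.pow_const 2)]
  exact and_iff_right (hf.comp_quasiMeasurePreserving hφ)

end Composition

lemma memLp_two_and_memLp_two_comp_iff {X E : Type*} [MeasurableSpace X] [NormedAddCommGroup E]
    {μ : Measure X} [SigmaFinite μ] {φ : X → X} (hφ : Measure.QuasiMeasurePreserving φ μ μ)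
    {f : X → E} (hf : AEStronglyMeasurable f μ) :
    MemLp f 2 μ ∧ MemLp (fun x => f (φ x)) 2 μ ↔
      ∫⁻ x, (1 + (μ.map φ).rnDeriv μ x) * ‖f x‖ₑ ^ 2 ∂μ < ∞ := by
  simp_rw [memLp_two_comp_iff hφ hf, memLp_two_iff_lintegral_enorm_sq_lt_top, add_mul, one_mul,
    lintegral_add_left' (hf.enorm.pow_const 2), ENNReal.add_lt_top, and_iff_right hf]

lemma enorm_ofReal_sqrt_sq (r : ℝ≥0) : ‖((NNReal.sqrt r : ℝ) : ℂ)‖ₑ ^ 2 = r := by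
  rw [← ofReal_norm, Complex.norm_real, NNReal.norm_eq, ← ENNReal.ofReal_pow (by positivity)]
  simp

theorem stmt5_general
    {X : Type*} [MeasurableSpace X] (μ : Measure X) [SigmaFinite μ]
    (φ : X → X) (hφ : Measurable φ)
    (hns : (μ.map φ) ≪ μ)
    (h : ℕ → X → ℝ≥0∞)
    (hh : ∀ i : ℕ, h i = (μ.map (φ^[i])).rnDeriv μ)
    (D : Set (X → ℂ))
    (hD : D = {f | MemLp f 2 μ ∧ MemLp (fun x => f (φ x)) 2 μ}) :
    (∀ f ∈ D, (fun x => f (φ x)) ∈ D) ↔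
      ∃ c : ℝ≥0, 0 < c ∧ ∀ᵐ x ∂μ, h 2 x ≤ c * (1 + h 1 x) := by
  have hq : Measure.QuasiMeasurePreserving φ μ μ := ⟨hφ, hns⟩
  have hh₁ : h 1 = (μ.map φ).rnDeriv μ := by simpa using hh 1
  have hm (i : ℕ) : Measurable (h i) := hh i ▸ Measure.measurable_rnDeriv _ _
  subst hD
  constructor
  · intro hmap
    refine exists_ae_le_const_mul_of_forall_lintegral_lt_top ((hm 1).const_add 1)
      (hm 2) (fun x => by simp) fun s hs hs_int => ?_
    set f : X → ℂ := fun x => (NNReal.sqrt (s x) : ℝ)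
    have hf : AEStronglyMeasurable f μ := by fun_prop
    have hfs (x : X) : ‖f x‖ₑ ^ 2 = s x := enorm_ofReal_sqrt_sq _
    have hfD := (memLp_two_and_memLp_two_comp_iff hq hf).2 <| by
      simpa only [hfs, hh₁] using hs_int
    simpa only [hfs, hh 2] using
      (memLp_two_comp_iff (hq.iterate 2) hf).1 (hmap f hfD).2
  · rintro ⟨c, -, hc⟩ f ⟨hf, hfφ⟩
    refine ⟨hfφ, (memLp_two_comp_iff (hq.iterate 2) hf.1).2 ?_⟩
    have hint := (memLp_two_and_memLp_two_comp_iff hq hf.1).1 ⟨hf, hfφ⟩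
    rw [← hh₁] at hint
    rw [← hh 2]
    calc ∫⁻ x, h 2 x * ‖f x‖ₑ ^ 2 ∂μ ≤ ∫⁻ x, c * ((1 + h 1 x) * ‖f x‖ₑ ^ 2) ∂μ :=
          lintegral_mono_ae (hc.mono fun x hx => by rw [← mul_assoc]; gcongr)
      _ = c * ∫⁻ x, (1 + h 1 x) * ‖f x‖ₑ ^ 2 ∂μ := lintegral_const_mul' _ _ coe_ne_top
      _ < ∞ := mul_lt_top coe_lt_top hint

/-- Corollary 2.4: if `D(C_φ)` is dense in `L²(μ)` then `C_φ` maps its domain into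
itself iff there is `c > 0` with `h₂ ≤ c(1 + h₁)` a.e., where `hᵢ = d(μ∘φ⁻ⁱ)/dμ`. -/
theorem stmt5
    {X : Type*} [MeasurableSpace X] (μ : Measure X) [SigmaFinite μ]
    (φ : X → X) (hφ : Measurable φ)
    (hns : (μ.map φ) ≪ μ)
    (h : ℕ → X → ℝ≥0∞)
    (hh : ∀ i : ℕ, h i = (μ.map (φ^[i])).rnDeriv μ)
    (D : Set (X → ℂ))
    (hD : D = {f | MemLp f 2 μ ∧ MemLp (fun x => f (φ x)) 2 μ})
    (hdense : Dense {f : Lp ℂ 2 μ | MemLp (fun x => (f : X → ℂ) (φ x)) 2 μ}) :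
    (∀ f ∈ D, (fun x => f (φ x)) ∈ D) ↔
      ∃ c : ℝ≥0, 0 < c ∧ ∀ᵐ x ∂μ, h 2 x ≤ c * (1 + h 1 x) :=
  stmt5_general μ φ hφ hns h hh D hD
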